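/- Let ★ be a semistar operation on an integral domain D and let F be a nonzero finitely generated fractional ideal. Then F is ★-e.a.b. if and only if F is ★_f-a.b., where ★_f is the finite-type semistar operation associated to ★. -/

import Mathlib

set_option linter.unusedSectionVars false
set_option linter.unusedVariables false

variable (D : Type*) [CommRing D] [IsDomain D]

/-- A semistar operation on an integral domain `D`. -/
def IsSemistarOp (s : Submodule D (FractionRing D) → Submodule D (FractionRing D)) : Prop :=
  (∀ z : FractionRing D, z ≠ 0 → ∀ E : Submodule D (FractionRing D), E ≠ ⊥ →
      s (Submodule.span D {z} * E) = Submodule.span D {z} * s E) ∧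
  (∀ E F : Submodule D (FractionRing D), E ≠ ⊥ → F ≠ ⊥ → E ≤ F → s E ≤ s F) ∧
  (∀ E : Submodule D (FractionRing D), E ≠ ⊥ → E ≤ s E) ∧
  (∀ E : Submodule D (FractionRing D), E ≠ ⊥ → s (s E) = s E)

/-- The finite-type operation `★_f` associated to `★`. -/
def starf (s : Submodule D (FractionRing D) → Submodule D (FractionRing D))
    (E : Submodule D (FractionRing D)) : Submodule D (FractionRing D) :=
  ⨆ (F : Submodule D (FractionRing D)) (_ : F ≤ E) (_ : F ≠ ⊥) (_ : F.FG), s F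

/-- `F` is `★`-e.a.b.: `(FG)★ ⊆ (FH)★` implies `G★ ⊆ H★` for all nonzero finitely
generated fractional ideals `G`, `H`. -/
def IsStarEab (s : Submodule D (FractionRing D) → Submodule D (FractionRing D))
    (F : Submodule D (FractionRing D)) : Prop :=
  ∀ G H : Submodule D (FractionRing D), G ≠ ⊥ → G.FG → H ≠ ⊥ → H.FG →
    s (F * G) ≤ s (F * H) → s G ≤ s H

/-- `F` is `★`-a.b.: `(FG)★ ⊆ (FH)★` implies `G★ ⊆ H★` for all nonzero
`D`-submodules `G`, `H` of `K`. -/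
def IsStarAb (s : Submodule D (FractionRing D) → Submodule D (FractionRing D))
    (F : Submodule D (FractionRing D)) : Prop :=
  ∀ G H : Submodule D (FractionRing D), G ≠ ⊥ → H ≠ ⊥ →
    s (F * G) ≤ s (F * H) → s G ≤ s H

section Aux

variable {D}
variable (s : Submodule D (FractionRing D) → Submodule D (FractionRing D))

lemma aux_mul_ne_bot {G H : Submodule D (FractionRing D)} (hG : G ≠ ⊥) (hH : H ≠ ⊥) :
    G * H ≠ ⊥ := by
  obtain ⟨a, haG, ha⟩ := G.ne_bot_iff.mp hG
  obtain ⟨b, hbH, hb⟩ := H.ne_bot_iff.mp hH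
  exact (G * H).ne_bot_iff.mpr ⟨a * b, Submodule.mul_mem_mul haG hbH, mul_ne_zero ha hb⟩

lemma le_starf {E F' : Submodule D (FractionRing D)} (h1 : F' ≤ E) (h2 : F' ≠ ⊥)
    (h3 : F'.FG) : s F' ≤ starf D s E := by
  refine le_iSup_of_le F' ?_
  rw [iSup_pos h1, iSup_pos h2, iSup_pos h3]

lemma starf_le {E M : Submodule D (FractionRing D)}
    (h : ∀ F', F' ≤ E → F' ≠ ⊥ → F'.FG → s F' ≤ M) : starf D s E ≤ M :=
  iSup_le fun F' => iSup_le fun h1 => iSup_le fun h2 => iSup_le fun h3 => h F' h1 h2 h3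

variable (hmono : ∀ E F : Submodule D (FractionRing D), E ≠ ⊥ → F ≠ ⊥ → E ≤ F → s E ≤ s F)

/-- index type for the directed supremum defining `starf`. -/
abbrev idx (E : Submodule D (FractionRing D)) :=
  {F : Submodule D (FractionRing D) // F ≤ E ∧ F ≠ ⊥ ∧ F.FG}

lemma idx_nonempty {E : Submodule D (FractionRing D)} (hE : E ≠ ⊥) : Nonempty (idx E) := by
  obtain ⟨x, hxE, hx⟩ := E.ne_bot_iff.mp hE
  exact ⟨⟨Submodule.span D {x}, (Submodule.span_singleton_le_iff_mem x E).mpr hxE,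
    fun h => hx (by simpa [Submodule.span_singleton_eq_bot] using h),
    Submodule.fg_span_singleton x⟩⟩

include hmono in
lemma idx_directed {E : Submodule D (FractionRing D)} :
    Directed (· ≤ ·) (fun i : idx E => s i.1) := by
  rintro ⟨Fi, hi1, hi2, hi3⟩ ⟨Fj, hj1, hj2, hj3⟩
  refine ⟨⟨Fi ⊔ Fj, sup_le hi1 hj1, fun h => hi2 (le_bot_iff.mp (le_sup_left.trans h.le)),
    hi3.sup hj3⟩, ?_, ?_⟩
  · exact hmono _ _ hi2 (fun h => hi2 (le_bot_iff.mp (le_sup_left.trans h.le))) le_sup_left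
  · exact hmono _ _ hj2 (fun h => hj2 (le_bot_iff.mp (le_sup_right.trans h.le))) le_sup_right

lemma starf_eq_iSup (E : Submodule D (FractionRing D)) :
    starf D s E = ⨆ i : idx E, s i.1 :=
  le_antisymm
    (starf_le s fun F' h1 h2 h3 => le_iSup (fun i : idx E => s i.1) ⟨F', h1, h2, h3⟩)
    (iSup_le fun i => le_starf s i.2.1 i.2.2.1 i.2.2.2)

include hmono in
lemma mem_starf {E : Submodule D (FractionRing D)} (hE : E ≠ ⊥)
    {x : FractionRing D} (hx : x ∈ starf D s E) :
    ∃ F', F' ≤ E ∧ F' ≠ ⊥ ∧ F'.FG ∧ x ∈ s F' := by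
  rw [starf_eq_iSup] at hx
  have : Nonempty (idx E) := idx_nonempty hE
  obtain ⟨i, hi⟩ := (Submodule.mem_iSup_of_directed _ (idx_directed s hmono)).mp hx
  exact ⟨i.1, i.2.1, i.2.2.1, i.2.2.2, hi⟩

include hmono in
lemma starf_eq_of_fg {E : Submodule D (FractionRing D)} (hE : E ≠ ⊥) (hEfg : E.FG) :
    starf D s E = s E :=
  le_antisymm (starf_le s fun F' h1 h2 _ => hmono F' E h2 hE h1)
    (le_starf s le_rfl hE hEfg)

/-- compactness: a finitely generated submodule below a directed supremum is below
one of the terms. -/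
lemma fg_le_iSup {ι : Type*} [Nonempty ι] {f : ι → Submodule D (FractionRing D)}
    (hdir : Directed (· ≤ ·) f) {N : Submodule D (FractionRing D)} (hN : N.FG)
    (h : N ≤ ⨆ i, f i) : ∃ i, N ≤ f i := by
  have hc := (Submodule.fg_iff_compact N).mp hN
  rw [CompleteLattice.isCompactElement_iff_le_of_directed_sSup_le] at hc
  obtain ⟨x, hx, hlex⟩ := hc (Set.range f) (Set.range_nonempty f)
    (directedOn_range.mpr hdir) (by rwa [sSup_range])
  obtain ⟨i, rfl⟩ := hx
  exact ⟨i, hlex⟩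

lemma mul_eq_iSup {F H : Submodule D (FractionRing D)} (hF : F ≠ ⊥) (hH : H ≠ ⊥) :
    F * H = ⨆ i : idx H, F * i.1 := by
  have : Nonempty (idx H) := idx_nonempty hH
  refine le_antisymm (Submodule.mul_le.mpr fun m hm n hn => ?_)
    (iSup_le fun i => mul_le_mul' le_rfl i.2.1)
  by_cases hn0 : n = 0
  · simp [hn0]
  · refine le_iSup (fun i : idx H => F * i.1)
      ⟨Submodule.span D {n}, (Submodule.span_singleton_le_iff_mem n H).mpr hn,
        fun h => hn0 (by simpa [Submodule.span_singleton_eq_bot] using h),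
        Submodule.fg_span_singleton n⟩ ?_
    exact Submodule.mul_mem_mul hm (Submodule.mem_span_singleton_self n)

/-- key decomposition: a fg submodule contained in `F * H` is contained in `F * H'`
for some fg nonzero `H' ≤ H`. -/
lemma exists_fg_factor {F H J : Submodule D (FractionRing D)} (hF : F ≠ ⊥) (hH : H ≠ ⊥)
    (hJ : J.FG) (hle : J ≤ F * H) :
    ∃ H', H' ≤ H ∧ H' ≠ ⊥ ∧ H'.FG ∧ J ≤ F * H' := by
  have : Nonempty (idx H) := idx_nonempty hH
  rw [mul_eq_iSup hF hH] at hle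
  have hdir : Directed (· ≤ ·) (fun i : idx H => F * i.1) := by
    rintro ⟨Fi, hi1, hi2, hi3⟩ ⟨Fj, hj1, hj2, hj3⟩
    exact ⟨⟨Fi ⊔ Fj, sup_le hi1 hj1, fun h => hi2 (le_bot_iff.mp (le_sup_left.trans h.le)),
      hi3.sup hj3⟩, mul_le_mul' le_rfl le_sup_left,
      mul_le_mul' le_rfl le_sup_right⟩
  obtain ⟨i, hi⟩ := fg_le_iSup hdir hJ hle
  exact ⟨i.1, i.2.1, i.2.2.1, i.2.2.2, hi⟩

end Aux

/-- A nonzero finitely generated fractional ideal `F` is `★`-e.a.b. iff it is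
`★_f`-a.b. -/
theorem starEab_iff_starf_ab
    (s : Submodule D (FractionRing D) → Submodule D (FractionRing D))
    (hs : IsSemistarOp D s)
    (F : Submodule D (FractionRing D)) (hF : F ≠ ⊥) (hfg : F.FG) :
    IsStarEab D s F ↔ IsStarAb D (starf D s) F := by
  obtain ⟨-, hmono, hext, hidem⟩ := hs
  constructor
  · intro heab G H hG hH hle x hx
    -- pick a fg nonzero G' ≤ G with x ∈ s G'
    obtain ⟨G', hG'le, hG'ne, hG'fg, hxG'⟩ := mem_starf s hmono hG hx
    have hFG' : F * G' ≠ ⊥ := aux_mul_ne_bot hF hG'ne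
    have hFG'fg : (F * G').FG := hfg.mul hG'fg
    -- s (F * G') is below starf (F * H)
    have h1 : s (F * G') ≤ starf D s (F * H) :=
      (le_starf s (mul_le_mul' le_rfl hG'le) hFG' hFG'fg).trans hle
    have h2 : F * G' ≤ starf D s (F * H) := (hext _ hFG').trans h1
    -- extract a single fg nonzero J ≤ F * H with F * G' ≤ s J
    have hFH : F * H ≠ ⊥ := aux_mul_ne_bot hF hH
    rw [starf_eq_iSup] at h2
    have : Nonempty (idx (F * H)) := idx_nonempty hFH
    obtain ⟨⟨J, hJle, hJne, hJfg⟩, hJ⟩ :=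
      fg_le_iSup (idx_directed s hmono) hFG'fg h2
    -- factor J through F * H' with H' fg nonzero ≤ H
    obtain ⟨H', hH'le, hH'ne, hH'fg, hJH'⟩ := exists_fg_factor hF hH hJfg hJle
    have hFH' : F * H' ≠ ⊥ := aux_mul_ne_bot hF hH'ne
    have h3 : F * G' ≤ s (F * H') := hJ.trans (hmono _ _ hJne hFH' hJH')
    have h4 : s (F * G') ≤ s (F * H') := by
      have hsne : s (F * H') ≠ ⊥ := fun h =>
        hFH' (le_bot_iff.mp ((hext _ hFH').trans h.le))
      have := hmono _ _ hFG' hsne h3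
      rwa [hidem _ hFH'] at this
    have h5 : s G' ≤ s H' := heab G' H' hG'ne hG'fg hH'ne hH'fg h4
    exact le_starf s hH'le hH'ne hH'fg (h5 hxG')
  · intro hab G H hG hGfg hH hHfg hle
    have eG := starf_eq_of_fg s hmono hG hGfg
    have eH := starf_eq_of_fg s hmono hH hHfg
    have eFG := starf_eq_of_fg s hmono (aux_mul_ne_bot hF hG) (hfg.mul hGfg)
    have eFH := starf_eq_of_fg s hmono (aux_mul_ne_bot hF hH) (hfg.mul hHfg)
    have := hab G H hG hH (by rw [eFG, eFH]; exact hle)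
    rwa [eG, eH] at this
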